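/- arXiv:math/0107171 — 5 statements merged into one kernel-verified Lean document; each statement's English description precedes it below -/
import Mathlib

section
/- Let (Z,d) be a metric space and let η₀(t) = 3·max(t, √t) for t > 0. For every four-tuple (z₁,z₂,z₃,z₄) of distinct points in Z, the modified cross-ratio ⟨z₁,z₂,z₃,z₄⟩ := (min(d(z₁,z₃), d(z₂,z₄)))/(min(d(z₁,z₄), d(z₂,z₃))) satisfies ⟨z₁,z₂,z₃,z₄⟩ ≤ η₀([z₁,z₂,z₃,z₄]), where [z₁,z₂,z₃,z₄] := (d(z₁,z₃)·d(z₂,z₄))/(d(z₁,z₄)·d(z₂,z₃)). -/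
/-- The cross-ratio of four points in a metric space:
`[z₁,z₂,z₃,z₄] = d(z₁,z₃)d(z₂,z₄)/(d(z₁,z₄)d(z₂,z₃))`. -/
noncomputable def crossRatio {Z : Type*} [MetricSpace Z] (z1 z2 z3 z4 : Z) : ℝ :=
  (dist z1 z3 * dist z2 z4) / (dist z1 z4 * dist z2 z3)

/-- The modified cross-ratio
`⟨z₁,z₂,z₃,z₄⟩ = min(d(z₁,z₃),d(z₂,z₄))/min(d(z₁,z₄),d(z₂,z₃))`. -/
noncomputable def modCrossRatio {Z : Type*} [MetricSpace Z] (z1 z2 z3 z4 : Z) : ℝ :=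
  min (dist z1 z3) (dist z2 z4) / min (dist z1 z4) (dist z2 z3)

lemma aux_cross_ratio (a b c e : ℝ) (ha : 0 < a) (hb : 0 < b) (hc : 0 < c) (he : 0 < e)
    (tri1 : c ≤ a + e + b) (tri2 : e ≤ b + c + a) :
    min a b / min c e ≤ 3 * max (a * b / (c * e)) (Real.sqrt (a * b / (c * e))) := by
  have hm : 0 < min a b := lt_min ha hb
  have hn : 0 < min c e := lt_min hc he
  have hA : 0 < max a b := lt_max_of_lt_left ha
  have hM : 0 < max c e := lt_max_of_lt_left hc
  have hmA : min a b * max a b = a * b := min_mul_max a b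
  have hnM : min c e * max c e = c * e := min_mul_max c e
  have hce : 0 < c * e := mul_pos hc he
  have hab : 0 < a * b := mul_pos ha hb
  have ht : 0 < a * b / (c * e) := div_pos hab hce
  rcases le_or_gt (max c e) (3 * min c e) with hcase | hcase
  · -- sqrt case
    have key : min a b / min c e ≤ 3 * Real.sqrt (a * b / (c * e)) := by
      have s9 : Real.sqrt 9 = 3 := by
        rw [show (9:ℝ) = 3 ^ 2 by norm_num, Real.sqrt_sq (by norm_num : (0:ℝ) ≤ 3)]
      have h9 : (3 : ℝ) * Real.sqrt (a * b / (c * e)) = Real.sqrt (9 * (a * b / (c * e))) := by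
        rw [Real.sqrt_mul (by norm_num : (0:ℝ) ≤ 9), s9]
      rw [h9, Real.le_sqrt (div_nonneg hm.le hn.le) (by positivity)]
      have h2 : (9:ℝ) * (a * b / (c * e)) = 9 * (a * b) / (c * e) := by ring
      rw [div_pow, h2, div_le_div_iff₀ (by positivity) hce]
      rw [← hmA, ← hnM]
      nlinarith [mul_le_mul_of_nonneg_left hcase
          (by positivity : (0:ℝ) ≤ (min a b) ^ 2 * (min c e)),
        mul_le_mul_of_nonneg_left (min_le_max (a := a) (b := b))
          (by positivity : (0:ℝ) ≤ 3 * (min a b) * (min c e) ^ 2)]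
    calc min a b / min c e ≤ 3 * Real.sqrt (a * b / (c * e)) := key
      _ ≤ _ := by
        have := le_max_right (a * b / (c * e)) (Real.sqrt (a * b / (c * e)))
        linarith
  · -- linear case
    have hMab : max c e ≤ a + b + min c e := by
      rcases le_total c e with h | h
      · rw [max_eq_right h, min_eq_left h]; linarith
      · rw [max_eq_left h, min_eq_right h]; linarith
    have hab2 : a + b ≤ 2 * max a b := by
      have h1 := le_max_left a b; have h2 := le_max_right a b; linarith
    have hM3A : max c e ≤ 3 * max a b := by linarith
    have key : min a b / min c e ≤ 3 * (a * b / (c * e)) := by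
      have h2 : (3:ℝ) * (a * b / (c * e)) = 3 * (a * b) / (c * e) := by ring
      rw [h2, div_le_div_iff₀ hn hce, ← hmA, ← hnM]
      nlinarith [hm.le, hn.le, hA.le, hM.le, mul_pos hm hn]
    calc min a b / min c e ≤ 3 * (a * b / (c * e)) := key
      _ ≤ _ := by
        have := le_max_left (a * b / (c * e)) (Real.sqrt (a * b / (c * e)))
        linarith

/-- For every four-tuple of distinct points in a metric space,
`⟨z₁,z₂,z₃,z₄⟩ ≤ η₀([z₁,z₂,z₃,z₄])` where `η₀(t) = 3 max(t, √t)`. -/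
theorem stmt_0 {Z : Type*} [MetricSpace Z] (z1 z2 z3 z4 : Z)
    (h12 : z1 ≠ z2) (h13 : z1 ≠ z3) (h14 : z1 ≠ z4)
    (h23 : z2 ≠ z3) (h24 : z2 ≠ z4) (h34 : z3 ≠ z4) :
    modCrossRatio z1 z2 z3 z4 ≤
      3 * max (crossRatio z1 z2 z3 z4) (Real.sqrt (crossRatio z1 z2 z3 z4)) := by
  have tri1 : dist z1 z4 ≤ dist z1 z3 + dist z2 z3 + dist z2 z4 := by
    have := dist_triangle4 z1 z3 z2 z4
    rwa [dist_comm z3 z2] at this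
  have tri2 : dist z2 z3 ≤ dist z2 z4 + dist z1 z4 + dist z1 z3 := by
    have := dist_triangle4 z2 z4 z1 z3
    rwa [dist_comm z4 z1] at this
  simp only [modCrossRatio, crossRatio]
  exact aux_cross_ratio _ _ _ _ (dist_pos.mpr h13) (dist_pos.mpr h24)
    (dist_pos.mpr h14) (dist_pos.mpr h23) tri1 tri2
end

section
/- Suppose (Z,d) is λ-LLC. There exists a function δ₂: ℝ⁺ → ℝ⁺ (in fact independent of λ) such that for every ε > 0 and every four-tuple of distinct points (z₁,z₂,z₃,z₄) in Z: if there exist continua E, F ⊂ Z with z₁,z₃ ∈ E, z₂,z₄ ∈ F and relative distance Δ(E,F) ≥ 1/δ₂(ε), then [z₁,z₂,z₃,z₄] < ε. -/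
/-- A continuum: a compact connected set with more than one point. -/
def IsContinuum {Z : Type*} [MetricSpace Z] (E : Set Z) : Prop :=
  IsCompact E ∧ IsConnected E ∧ E.Nontrivial

/-- The distance between two subsets of a metric space. -/
noncomputable def setDist {Z : Type*} [MetricSpace Z] (E F : Set Z) : ℝ :=
  sInf (Set.image2 dist E F)

/-- The relative distance `Δ(E,F) = dist(E,F)/min(diam E, diam F)`. -/
noncomputable def relDelta {Z : Type*} [MetricSpace Z] (E F : Set Z) : ℝ :=
  setDist E F / min (Metric.diam E) (Metric.diam F)

/-- `Z` is `λ`-LLC: (LLC₁) any two points of `B(a,r)` lie in a continuum inside `B(a,λr)`,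
and (LLC₂) any two points outside `B(a,r)` lie in a continuum inside `Z \ B(a, r/λ)`. -/
def IsLLC (Z : Type*) [MetricSpace Z] (lam : ℝ) : Prop :=
  (∀ (a : Z) (r : ℝ), ∀ x ∈ Metric.ball a r, ∀ y ∈ Metric.ball a r,
      ∃ E : Set Z, IsContinuum E ∧ E ⊆ Metric.ball a (lam * r) ∧ x ∈ E ∧ y ∈ E) ∧
  (∀ (a : Z) (r : ℝ), ∀ x ∉ Metric.ball a r, ∀ y ∉ Metric.ball a r,
      ∃ E : Set Z, IsContinuum E ∧ E ⊆ (Metric.ball a (r / lam))ᶜ ∧ x ∈ E ∧ y ∈ E)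

/-- If `Z` is `λ`-LLC then there is a function `δ₂ : ℝ⁺ → ℝ⁺` (independent of `λ`) such
that whenever distinct points `z₁,z₃` lie in a continuum `E` and `z₂,z₄` in a continuum `F`
with `Δ(E,F) ≥ 1/δ₂(ε)`, then `[z₁,z₂,z₃,z₄] < ε`. -/
theorem stmt_2 :
    ∃ δ2 : ℝ → ℝ, (∀ ε > (0:ℝ), 0 < δ2 ε) ∧
      ∀ (Z : Type) [MetricSpace Z] (lam : ℝ), 1 ≤ lam → IsLLC Z lam →
        ∀ ε > (0:ℝ), ∀ z1 z2 z3 z4 : Z,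
          z1 ≠ z2 → z1 ≠ z3 → z1 ≠ z4 → z2 ≠ z3 → z2 ≠ z4 → z3 ≠ z4 →
          ∀ E F : Set Z, IsContinuum E → IsContinuum F →
            z1 ∈ E → z3 ∈ E → z2 ∈ F → z4 ∈ F →
            1 / δ2 ε ≤ relDelta E F →
            crossRatio z1 z2 z3 z4 < ε := by
  refine ⟨fun ε => min (ε / 4) 1, fun ε hε => lt_min (by linarith) one_pos, ?_⟩
  intro Z _ lam _ _ ε hε z1 z2 z3 z4 h12 h13 h14 h23 h24 h34 E F hE hF hz1 hz3 hz2 hz4 hΔ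
  set δ : ℝ := min (ε / 4) 1 with hδdef
  have hδpos : 0 < δ := lt_min (by linarith) one_pos
  have hδ1 : δ ≤ 1 := min_le_right _ _
  have hδε : δ ≤ ε / 4 := min_le_left _ _
  have hEb := hE.1.isBounded
  have hFb := hF.1.isBounded
  have htE : 0 < Metric.diam E :=
    lt_of_lt_of_le (dist_pos.mpr h13) (Metric.dist_le_diam_of_mem hEb hz1 hz3)
  have htF : 0 < Metric.diam F :=
    lt_of_lt_of_le (dist_pos.mpr h24) (Metric.dist_le_diam_of_mem hFb hz2 hz4)
  set t : ℝ := min (Metric.diam E) (Metric.diam F) with htdef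
  have ht : 0 < t := lt_min htE htF
  set D : ℝ := setDist E F with hDdef
  have hbdd : BddBelow (Set.image2 dist E F) :=
    ⟨0, fun x hx => by rcases hx with ⟨a, ha, b, hb, rfl⟩; exact dist_nonneg⟩
  have hD14 : D ≤ dist z1 z4 := csInf_le hbdd (Set.mem_image2_of_mem hz1 hz4)
  have hD23 : D ≤ dist z2 z3 := by
    have : dist z3 z2 ∈ Set.image2 dist E F := Set.mem_image2_of_mem hz3 hz2
    have h := csInf_le hbdd this
    rwa [dist_comm z3 z2] at h
  have htδD : t ≤ δ * D := by
    have : 1 / δ ≤ D / t := hΔ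
    rw [div_le_div_iff₀ hδpos ht] at this
    nlinarith
  have hd14 : 0 < dist z1 z4 := dist_pos.mpr h14
  have hd23 : 0 < dist z2 z3 := dist_pos.mpr h23
  have hkey : dist z1 z3 * dist z2 z4 < ε * (dist z1 z4 * dist z2 z3) := by
    rcases le_total (Metric.diam E) (Metric.diam F) with hc | hc
    · have h1 : dist z1 z3 ≤ δ * dist z1 z4 := by
        have := Metric.dist_le_diam_of_mem hEb hz1 hz3
        have ht' : t = Metric.diam E := min_eq_left hc
        nlinarith
      have h2 : dist z1 z3 ≤ δ * dist z2 z3 := by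
        have := Metric.dist_le_diam_of_mem hEb hz1 hz3
        have ht' : t = Metric.diam E := min_eq_left hc
        nlinarith
      have htri : dist z2 z4 ≤ dist z2 z3 + dist z1 z3 + dist z1 z4 := by
        have a1 := dist_triangle z2 z3 z4
        have a2 := dist_triangle z3 z1 z4
        rw [dist_comm z3 z1] at a2
        linarith
      nlinarith [mul_le_mul_of_nonneg_left htri (dist_nonneg (x := z1) (y := z3)),
        mul_le_mul_of_nonneg_right h1 hd23.le, mul_le_mul_of_nonneg_right h2 hd14.le,
        mul_le_mul h1 h2 (dist_nonneg (x := z1) (y := z3)) (by positivity),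
        mul_nonneg (mul_nonneg (sub_nonneg.mpr hδ1) hδpos.le) (mul_nonneg hd14.le hd23.le),
        mul_pos (show (0:ℝ) < ε - 3 * δ by linarith) (mul_pos hd14 hd23)]
    · have h1 : dist z2 z4 ≤ δ * dist z1 z4 := by
        have := Metric.dist_le_diam_of_mem hFb hz2 hz4
        have ht' : t = Metric.diam F := min_eq_right hc
        nlinarith
      have h2 : dist z2 z4 ≤ δ * dist z2 z3 := by
        have := Metric.dist_le_diam_of_mem hFb hz2 hz4
        have ht' : t = Metric.diam F := min_eq_right hc
        nlinarith
      have htri : dist z1 z3 ≤ dist z1 z4 + dist z2 z4 + dist z2 z3 := by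
        have a1 := dist_triangle z1 z4 z3
        have a2 := dist_triangle z4 z2 z3
        rw [dist_comm z4 z2] at a2
        linarith
      nlinarith [mul_le_mul_of_nonneg_right htri (dist_nonneg (x := z2) (y := z4)),
        mul_le_mul_of_nonneg_right h1 hd23.le, mul_le_mul_of_nonneg_right h2 hd14.le,
        mul_le_mul h1 h2 (dist_nonneg (x := z2) (y := z4)) (by positivity),
        mul_nonneg (mul_nonneg (sub_nonneg.mpr hδ1) hδpos.le) (mul_nonneg hd14.le hd23.le),
        mul_pos (show (0:ℝ) < ε - 3 * δ by linarith) (mul_pos hd14 hd23)]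
  rw [crossRatio, div_lt_iff₀ (mul_pos hd14 hd23)]
  linarith
end

section
/- Suppose (Z,d) is λ-LLC. Then there exists a function δ₁: ℝ⁺ → ℝ⁺ depending only on λ such that for every ε > 0 and every four-tuple of distinct points (z₁,z₂,z₃,z₄) in Z with [z₁,z₂,z₃,z₄] < δ₁(ε), there exist continua E, F ⊂ Z with z₁,z₃ ∈ E, z₂,z₄ ∈ F, and Δ(E,F) ≥ 1/ε. -/
section

variable {Z : Type*} [MetricSpace Z]

lemma setDist_comm (E F : Set Z) : setDist E F = setDist F E := by
  rw [setDist, setDist, Set.image2_swap]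
  simp only [dist_comm]

lemma relDelta_comm (E F : Set Z) : relDelta E F = relDelta F E := by
  rw [relDelta, relDelta, setDist_comm, min_comm]

lemma le_setDist {E F : Set Z} (hE : E.Nonempty) (hF : F.Nonempty) {c : ℝ}
    (h : ∀ x ∈ E, ∀ y ∈ F, c ≤ dist x y) : c ≤ setDist E F :=
  le_csInf (hE.image2 hF) (by rintro _ ⟨x, hx, y, hy, rfl⟩; exact h x hx y hy)

lemma IsContinuum.diam_pos {E : Set Z} (hE : IsContinuum E) : 0 < Metric.diam E := by
  obtain ⟨x, hx, y, hy, hxy⟩ := hE.2.2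
  exact (dist_pos.2 hxy).trans_le (Metric.dist_le_diam_of_mem hE.1.isBounded hx hy)

lemma div_le_relDelta_of_subset_ball {E F : Set Z} (hE : IsContinuum E) (hF : IsContinuum F)
    {z : Z} {r R : ℝ} (hrR : r ≤ R) (hEr : E ⊆ Metric.ball z r) (hFR : F ⊆ (Metric.ball z R)ᶜ) :
    (R - r) / (2 * r) ≤ relDelta E F := by
  have hgap : R - r ≤ setDist E F := by
    refine le_setDist hE.2.2.nonempty hF.2.2.nonempty fun x hx y hy => ?_
    have hx' : dist x z < r := hEr hx
    have hy' : R ≤ dist y z := not_lt.1 (hFR hy)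
    linarith [dist_triangle y x z, dist_comm x y]
  have hmin_pos : 0 < min (Metric.diam E) (Metric.diam F) := lt_min hE.diam_pos hF.diam_pos
  have hdiamE : Metric.diam E ≤ 2 * r :=
    (Metric.diam_mono hEr Metric.isBounded_ball).trans
      (Metric.diam_ball (Metric.nonempty_ball.1 (hE.2.2.nonempty.mono hEr)).le)
  exact div_le_div₀ ((sub_nonneg.2 hrR).trans hgap) hgap hmin_pos ((min_le_left _ _).trans hdiamE)

lemma mul_dist_lt_of_crossRatio_lt {z1 z2 z3 z4 : Z} (h14 : z1 ≠ z4) (h23 : z2 ≠ z3)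
    {K : ℝ} (hK : 0 < K) (h : crossRatio z1 z2 z3 z4 < K⁻¹) :
    K * (dist z1 z3 * dist z2 z4) < dist z1 z4 * dist z2 z3 := by
  have hden : 0 < dist z1 z4 * dist z2 z3 := mul_pos (dist_pos.2 h14) (dist_pos.2 h23)
  rw [crossRatio, div_lt_iff₀ hden, ← div_eq_inv_mul, lt_div_iff₀ hK] at h
  linarith

lemma mul_dist_le_dist_of_sq_mul_lt {z1 z2 z3 z4 : Z} {C : ℝ} (hC : 0 ≤ C)
    (hle : dist z1 z3 ≤ dist z2 z4)
    (h : (C + 1) ^ 2 * (dist z1 z3 * dist z2 z4) < dist z1 z4 * dist z2 z3) :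
    C * dist z1 z3 ≤ dist z1 z2 ∧ C * dist z1 z3 ≤ dist z1 z4 := by
  have h13 := dist_nonneg (x := z1) (y := z3)
  have h23 := dist_nonneg (x := z2) (y := z3)
  have h14 := dist_nonneg (x := z1) (y := z4)
  constructor
  · by_contra! hfar
    have t14 : dist z1 z4 ≤ (C + 1) * dist z2 z4 := by
      nlinarith [dist_triangle z1 z2 z4]
    have t23 : dist z2 z3 ≤ (C + 1) * dist z1 z3 := by
      linarith [dist_triangle_left z2 z3 z1]
    nlinarith [mul_le_mul t14 t23 h23 (by positivity)]
  · by_contra! hfar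
    have t23 : dist z2 z3 ≤ (C + 2) * dist z2 z4 := by
      nlinarith [dist_triangle z2 z4 z3, dist_triangle_left z3 z4 z1, dist_comm z3 z4]
    nlinarith [mul_le_mul hfar.le t23 h23 (by positivity)]

lemma IsLLC.exists_continua_one_div_le_relDelta {lam : ℝ} (hZ : IsLLC Z lam) {ε : ℝ}
    (hε : 0 < ε) {z1 z2 z3 z4 : Z} (h13 : z1 ≠ z3)
    (h12 : 2 * lam ^ 2 * (1 + 2 / ε) * dist z1 z3 ≤ dist z1 z2)
    (h14 : 2 * lam ^ 2 * (1 + 2 / ε) * dist z1 z3 ≤ dist z1 z4) :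
    ∃ E F : Set Z, IsContinuum E ∧ IsContinuum F ∧
      z1 ∈ E ∧ z3 ∈ E ∧ z2 ∈ F ∧ z4 ∈ F ∧ 1 / ε ≤ relDelta E F := by
  set a := dist z1 z3
  have ha : 0 < a := dist_pos.2 h13
  obtain ⟨E, hE, hEball, hz1E, hz3E⟩ :=
    hZ.1 z1 (2 * a) z1 (Metric.mem_ball_self (by positivity)) z3
      (by rw [Metric.mem_ball, dist_comm]; linarith)
  -- `z₁ ∈ E ⊆ B(z₁, 2λa)` is what forces `λ > 0`.
  have hlam : 0 < lam := by
    have := Metric.pos_of_mem_ball (hEball hz1E)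
    nlinarith
  obtain ⟨F, hF, hFball, hz2F, hz4F⟩ :=
    hZ.2 z1 (2 * lam ^ 2 * (1 + 2 / ε) * a) z2
      (by rw [Metric.mem_ball, dist_comm, not_lt]; exact h12) z4
      (by rw [Metric.mem_ball, dist_comm, not_lt]; exact h14)
  refine ⟨E, F, hE, hF, hz1E, hz3E, hz2F, hz4F, ?_⟩
  have hradii : 2 * lam ^ 2 * (1 + 2 / ε) * a / lam = lam * (2 * a) + 4 * lam * a / ε := by
    field_simp
    ring
  have hratio : (2 * lam ^ 2 * (1 + 2 / ε) * a / lam - lam * (2 * a)) / (2 * (lam * (2 * a)))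
      = 1 / ε := by
    rw [hradii]
    field_simp
    ring
  rw [← hratio]
  refine div_le_relDelta_of_subset_ball hE hF ?_ hEball hFball
  rw [hradii]
  have : 0 < 4 * lam * a / ε := by positivity
  linarith

end

theorem stmt_3_general (lam : ℝ) :
    ∃ δ1 : ℝ → ℝ, (∀ ε > (0:ℝ), 0 < δ1 ε) ∧
      ∀ (Z : Type) [MetricSpace Z], IsLLC Z lam →
        ∀ ε > (0:ℝ), ∀ z1 z2 z3 z4 : Z,
          z1 ≠ z2 → z1 ≠ z3 → z1 ≠ z4 → z2 ≠ z3 → z2 ≠ z4 → z3 ≠ z4 →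
          crossRatio z1 z2 z3 z4 < δ1 ε →
          ∃ E F : Set Z, IsContinuum E ∧ IsContinuum F ∧
            z1 ∈ E ∧ z3 ∈ E ∧ z2 ∈ F ∧ z4 ∈ F ∧ 1 / ε ≤ relDelta E F := by
  refine ⟨fun ε => ((2 * lam ^ 2 * (1 + 2 / ε) + 1) ^ 2)⁻¹, fun ε hε => by positivity, ?_⟩
  intro Z _ hZ ε hε z1 z2 z3 z4 _ h13 h14 h23 h24 _ hcr
  have hC : 0 ≤ 2 * lam ^ 2 * (1 + 2 / ε) := by positivity
  have hprod := mul_dist_lt_of_crossRatio_lt h14 h23 (by positivity) hcr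
  rcases le_total (dist z1 z3) (dist z2 z4) with hle | hle
  · obtain ⟨h12', h14'⟩ := mul_dist_le_dist_of_sq_mul_lt hC hle hprod
    exact hZ.exists_continua_one_div_le_relDelta hε h13 h12' h14'
  · obtain ⟨h21', h23'⟩ := mul_dist_le_dist_of_sq_mul_lt (z1 := z2) (z2 := z1) (z3 := z4) (z4 := z3)
      hC hle (by linarith [mul_comm (dist z1 z3) (dist z2 z4), mul_comm (dist z1 z4) (dist z2 z3)])
    obtain ⟨E, F, hE, hF, hz2E, hz4E, hz1F, hz3F, hEF⟩ :=
      hZ.exists_continua_one_div_le_relDelta hε h24 h21' h23'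
    exact ⟨F, E, hF, hE, hz1F, hz3F, hz2E, hz4E, relDelta_comm E F ▸ hEF⟩

/-- If `Z` is `λ`-LLC, there exists `δ₁ : ℝ⁺ → ℝ⁺` depending only on `λ` such that whenever
`[z₁,z₂,z₃,z₄] < δ₁(ε)` for distinct points, there are continua `E ∋ z₁,z₃` and `F ∋ z₂,z₄`
with `Δ(E,F) ≥ 1/ε`. -/
theorem stmt_3 (lam : ℝ) (hlam : 1 ≤ lam) :
    ∃ δ1 : ℝ → ℝ, (∀ ε > (0:ℝ), 0 < δ1 ε) ∧
      ∀ (Z : Type) [MetricSpace Z], IsLLC Z lam →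
        ∀ ε > (0:ℝ), ∀ z1 z2 z3 z4 : Z,
          z1 ≠ z2 → z1 ≠ z3 → z1 ≠ z4 → z2 ≠ z3 → z2 ≠ z4 → z3 ≠ z4 →
          crossRatio z1 z2 z3 z4 < δ1 ε →
          ∃ E F : Set Z, IsContinuum E ∧ IsContinuum F ∧
            z1 ∈ E ∧ z3 ∈ E ∧ z2 ∈ F ∧ z4 ∈ F ∧ 1 / ε ≤ relDelta E F :=
  stmt_3_general lam
end

section
/- Suppose f: X → Y is an η-quasi-Möbius map between metric spaces. Then there exists a function Φ: ℝ⁺ → ℝ⁺ with Φ(t) → ∞ as t → ∞, depending only on η, such that for all disjoint continua E, F ⊂ X, one has Δ(f(E), f(F)) ≥ Φ(Δ(E,F)). -/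
/-- A control function: a homeomorphism `η : [0,∞) → [0,∞)` with `η(0) = 0`. -/
def ControlFunction (η : ℝ → ℝ) : Prop :=
  η 0 = 0 ∧ StrictMonoOn η (Set.Ici 0) ∧ ContinuousOn η (Set.Ici 0) ∧
    Set.SurjOn η (Set.Ici 0) (Set.Ici 0)

/-- `f` is `η`-quasi-Möbius: `f` is injective and
`[f(x₁),f(x₂),f(x₃),f(x₄)] ≤ η([x₁,x₂,x₃,x₄])` for all four-tuples of distinct points. -/
def IsQuasiMobiusWith {X Y : Type*} [MetricSpace X] [MetricSpace Y]
    (η : ℝ → ℝ) (f : X → Y) : Prop :=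
  Function.Injective f ∧
  ∀ x1 x2 x3 x4 : X, x1 ≠ x2 → x1 ≠ x3 → x1 ≠ x4 → x2 ≠ x3 → x2 ≠ x4 → x3 ≠ x4 →
    crossRatio (f x1) (f x2) (f x3) (f x4) ≤ η (crossRatio x1 x2 x3 x4)

/-- `f` is `η`-quasisymmetric: `f` is injective and
`d(f x₁, f x₂)/d(f x₁, f x₃) ≤ η(d(x₁,x₂)/d(x₁,x₃))` for all triples of distinct points. -/
def IsQuasisymmetricWith {X Y : Type*} [MetricSpace X] [MetricSpace Y]
    (η : ℝ → ℝ) (f : X → Y) : Prop :=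
  Function.Injective f ∧
  ∀ x1 x2 x3 : X, x1 ≠ x2 → x1 ≠ x3 → x2 ≠ x3 →
    dist (f x1) (f x2) / dist (f x1) (f x3) ≤ η (dist x1 x2 / dist x1 x3)

open Set Metric Filter Topology Bornology

section SetDist

variable {Z : Type*} [MetricSpace Z] {E F : Set Z}

lemma bddBelow_image2_dist (E F : Set Z) : BddBelow (image2 dist E F) :=
  ⟨0, by rintro _ ⟨x, -, y, -, rfl⟩; exact dist_nonneg⟩

lemma setDist_nonneg (E F : Set Z) : 0 ≤ setDist E F :=
  Real.sInf_nonneg (by rintro _ ⟨x, -, y, -, rfl⟩; exact dist_nonneg)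

lemma setDist_le_dist {x y : Z} (hx : x ∈ E) (hy : y ∈ F) : setDist E F ≤ dist x y :=
  csInf_le (bddBelow_image2_dist E F) (mem_image2_of_mem hx hy)

lemma IsCompact.setDist_pos (hE : IsCompact E) (hF : IsCompact F) (hE' : E.Nonempty)
    (hF' : F.Nonempty) (hEF : Disjoint E F) : 0 < setDist E F := by
  have hcompact : IsCompact (image2 dist E F) := by
    rw [← image_prod]
    exact (hE.prod hF).image continuous_dist
  obtain ⟨x, hx, y, hy, hxy⟩ := hcompact.sInf_mem (hE'.image2 hF')
  rw [setDist, ← hxy]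
  exact dist_pos.2 (hEF.ne_of_mem hx hy)

lemma le_apply_setDist_of_forall_le {g : ℝ → ℝ} (hg : Continuous g) {c : ℝ} (hE : E.Nonempty)
    (hF : F.Nonempty) (h : ∀ x ∈ E, ∀ y ∈ F, c ≤ g (dist x y)) : c ≤ g (setDist E F) := by
  obtain ⟨u, -, hu, huS⟩ := exists_seq_tendsto_sInf (hE.image2 hF) (bddBelow_image2_dist E F)
  refine ge_of_tendsto' ((hg.tendsto _).comp hu) fun n => ?_
  obtain ⟨x, hx, y, hy, hxy⟩ := huS n
  simpa [← hxy] using h x hx y hy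

lemma exists_mem_diam_le_three_mul_dist (hE : 0 < diam E) (x : Z) :
    ∃ y ∈ E, diam E ≤ 3 * dist x y := by
  by_contra! h
  have : diam E ≤ 2 / 3 * diam E := diam_le_of_forall_dist_le (by positivity) fun y hy z hz => by
    linarith [dist_triangle_left y z x, h y hy, h z hz]
  linarith

end SetDist

section CrossRatio

variable {Z : Type*} [MetricSpace Z]

lemma crossRatio_nonneg (z1 z2 z3 z4 : Z) : 0 ≤ crossRatio z1 z2 z3 z4 := by
  unfold crossRatio
  positivity

lemma crossRatio_reverse (z1 z2 z3 z4 : Z) : crossRatio z4 z3 z2 z1 = crossRatio z1 z2 z3 z4 := by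
  unfold crossRatio
  rw [dist_comm z4 z2, dist_comm z3 z1, dist_comm z4 z1, dist_comm z3 z2, mul_comm (dist z2 z4)]

lemma crossRatio_le_of_dist_le {z1 z2 z3 z4 : Z} {δ s : ℝ} (hs : 0 < s)
    (h13 : dist z1 z3 ≤ δ) (h14 : s ≤ dist z1 z4) (h23 : s ≤ dist z2 z3) :
    crossRatio z1 z2 z3 z4 ≤ 2 * (δ / s) + (δ / s) ^ 2 := by
  have hδ : 0 ≤ δ := dist_nonneg.trans h13
  have h14' : 0 < dist z1 z4 := hs.trans_le h14
  have h23' : 0 < dist z2 z3 := hs.trans_le h23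
  have h24 : dist z2 z4 ≤ dist z2 z3 + δ + dist z1 z4 := by
    linarith [dist_triangle4 z2 z3 z1 z4, dist_comm z3 z1]
  calc crossRatio z1 z2 z3 z4
      ≤ δ * (dist z2 z3 + δ + dist z1 z4) / (dist z1 z4 * dist z2 z3) := by
        unfold crossRatio; gcongr
    _ = δ / dist z1 z4 + δ / dist z2 z3 + δ ^ 2 / (dist z1 z4 * dist z2 z3) := by
        field_simp; ring
    _ ≤ δ / s + δ / s + δ ^ 2 / (s * s) := by gcongr
    _ = 2 * (δ / s) + (δ / s) ^ 2 := by ring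

lemma div_two_mul_le_crossRatio {z1 z2 z3 z4 : Z} (h13 : 0 < dist z1 z3) (h14 : 0 < dist z1 z4)
    (h23 : 0 < dist z2 z3) (h34 : dist z3 z4 ≤ dist z1 z3) :
    dist z2 z4 / (2 * dist z2 z3) ≤ crossRatio z1 z2 z3 z4 := by
  have h14' : dist z1 z4 ≤ 2 * dist z1 z3 := by linarith [dist_triangle z1 z3 z4]
  calc dist z2 z4 / (2 * dist z2 z3)
      = dist z1 z3 * dist z2 z4 / (2 * dist z1 z3 * dist z2 z3) := by field_simp
    _ ≤ crossRatio z1 z2 z3 z4 := by unfold crossRatio; gcongr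

lemma mul_diam_le_of_crossRatio_le {S T : Set Z} (hS : IsBounded S) (hT : IsBounded T)
    {z1 z3 z2 z4 : Z} (h1 : z1 ∈ S) (h3 : z3 ∈ S) (h2 : z2 ∈ T) (h4 : z4 ∈ T)
    (h14 : 0 < dist z1 z4) (h23 : 0 < dist z2 z3) {k : ℝ} (hk : 0 ≤ k)
    (h13 : diam S ≤ 3 * dist z1 z3) (h42 : diam T ≤ 3 * dist z4 z2)
    (hcr : crossRatio z1 z2 z3 z4 ≤ k) :
    diam S * diam T ≤ 9 * k * dist z1 z4 * (diam S + diam T + dist z1 z4) := by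
  have hprod : dist z1 z3 * dist z2 z4 ≤ k * (dist z1 z4 * dist z2 z3) :=
    (div_le_iff₀ (by positivity)).1 hcr
  have h23' : dist z2 z3 ≤ diam S + diam T + dist z1 z4 := by
    linarith [dist_triangle4 z2 z4 z1 z3, dist_comm z4 z1, dist_le_diam_of_mem hS h1 h3,
      dist_le_diam_of_mem hT h2 h4]
  calc diam S * diam T ≤ (3 * dist z1 z3) * (3 * dist z2 z4) := by
        rw [dist_comm z2 z4]; gcongr
    _ = 9 * (dist z1 z3 * dist z2 z4) := by ring
    _ ≤ 9 * (k * (dist z1 z4 * dist z2 z3)) := by gcongr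
    _ ≤ 9 * k * dist z1 z4 * (diam S + diam T + dist z1 z4) := by
        rw [← mul_assoc, ← mul_assoc]; gcongr

lemma crossRatio_le_of_mem {E F : Set Z} (hE : IsBounded E) (hF : IsBounded F)
    (hEF : 0 < setDist E F) {z1 z2 z3 z4 : Z} (h1 : z1 ∈ E) (h3 : z3 ∈ E) (h2 : z2 ∈ F)
    (h4 : z4 ∈ F) : crossRatio z1 z2 z3 z4 ≤ 2 * (relDelta E F)⁻¹ + (relDelta E F)⁻¹ ^ 2 := by
  have h14 : setDist E F ≤ dist z1 z4 := setDist_le_dist h1 h4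
  have h23 : setDist E F ≤ dist z2 z3 := dist_comm z3 z2 ▸ setDist_le_dist h3 h2
  rw [relDelta, inv_div]
  rcases min_cases (diam E) (diam F) with ⟨hmin, -⟩ | ⟨hmin, -⟩ <;> rw [hmin]
  · exact crossRatio_le_of_dist_le hEF (dist_le_diam_of_mem hE h1 h3) h14 h23
  · rw [← crossRatio_reverse]
    exact crossRatio_le_of_dist_le hEF (dist_le_diam_of_mem hF h4 h2) (dist_comm z1 z4 ▸ h14)
      (dist_comm z2 z3 ▸ h23)

end CrossRatio

lemma min_le_mul_of_mul_le {a b D K : ℝ} (ha : 0 < a) (hb : 0 < b) (hD : 0 ≤ D) (hK : 0 ≤ K)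
    (h : a * b ≤ K * D * (a + b + D)) : min a b ≤ max (3 * K) √(3 * K) * D := by
  set m := min a b
  set M := max a b
  have hm : 0 < m := lt_min ha hb
  have hmM : m ≤ M := min_le_max
  have h' : m * M ≤ K * D * (m + M + D) := by rwa [min_mul_max, min_add_max]
  rcases le_or_gt D M with hDM | hMD
  · have : m * M ≤ 3 * K * D * M := by
      nlinarith [mul_le_mul_of_nonneg_left (by linarith : m + M + D ≤ 3 * M) (mul_nonneg hK hD)]
    have : m ≤ 3 * K * D := le_of_mul_le_mul_right this (hm.trans_le hmM)
    nlinarith [le_max_left (3 * K) √(3 * K)]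
  · have hsq : m ^ 2 ≤ (√(3 * K) * D) ^ 2 := by
      rw [mul_pow, Real.sq_sqrt (by positivity)]
      nlinarith [mul_le_mul_of_nonneg_left (by linarith : m + M + D ≤ 3 * D) (mul_nonneg hK hD),
        mul_le_mul_of_nonneg_left hmM hm.le]
    have : m ≤ √(3 * K) * D := (pow_le_pow_iff_left₀ hm.le (by positivity) two_ne_zero).1 hsq
    nlinarith [le_max_right (3 * K) √(3 * K)]

lemma tendsto_nhdsGT_zero_of_continuousWithinAt {h : ℝ → ℝ} (hc : ContinuousWithinAt h (Ioi 0) 0)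
    (h0 : h 0 = 0) (hpos : ∀ x > 0, 0 < h x) : Tendsto h (𝓝[>] 0) (𝓝[>] 0) :=
  tendsto_nhdsWithin_iff.2 ⟨by simpa [h0] using hc.tendsto, eventually_mem_nhdsWithin.mono hpos⟩

noncomputable def relDeltaLowerBound (η : ℝ → ℝ) (t : ℝ) : ℝ :=
  (max (27 * η (2 * t⁻¹ + t⁻¹ ^ 2)) √(27 * η (2 * t⁻¹ + t⁻¹ ^ 2)))⁻¹

namespace ControlFunction

variable {η : ℝ → ℝ}

lemma pos (hη : ControlFunction η) {x : ℝ} (hx : 0 < x) : 0 < η x := by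
  simpa [hη.1] using hη.2.1 self_mem_Ici hx.le hx

lemma tendsto_nhdsWithin_Ici (hη : ControlFunction η) : Tendsto η (𝓝[≥] 0) (𝓝 0) := by
  simpa [hη.1] using (hη.2.2.1 0 self_mem_Ici).tendsto

lemma relDeltaLowerBound_pos (hη : ControlFunction η) {t : ℝ} (ht : 0 < t) :
    0 < relDeltaLowerBound η t := by
  have := hη.pos (by positivity : 0 < 2 * t⁻¹ + t⁻¹ ^ 2)
  exact inv_pos.2 (lt_max_of_lt_left (by positivity))

lemma tendsto_relDeltaLowerBound (hη : ControlFunction η) :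
    Tendsto (relDeltaLowerBound η) atTop atTop := by
  have hψ : Tendsto (fun u : ℝ => 2 * u + u ^ 2) (𝓝[>] 0) (𝓝[>] 0) :=
    tendsto_nhdsGT_zero_of_continuousWithinAt (by fun_prop) (by simp) fun u hu => by positivity
  have hη' : Tendsto η (𝓝[>] 0) (𝓝[>] 0) :=
    tendsto_nhdsGT_zero_of_continuousWithinAt ((hη.2.2.1 0 self_mem_Ici).mono Ioi_subset_Ici_self)
      hη.1 fun x hx => hη.pos hx
  have hmax : Tendsto (fun k : ℝ => max (27 * k) √(27 * k)) (𝓝[>] 0) (𝓝[>] 0) :=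
    tendsto_nhdsGT_zero_of_continuousWithinAt (by fun_prop) (by simp)
      fun k hk => lt_max_of_lt_left (by positivity)
  exact (hmax.comp (hη'.comp (hψ.comp tendsto_inv_atTop_nhdsGT_zero))).inv_tendsto_nhdsGT_zero

end ControlFunction

namespace IsQuasiMobiusWith

variable {X Y : Type*} [MetricSpace X] [MetricSpace Y] {η : ℝ → ℝ} {f : X → Y}

lemma dist_pos (hf : IsQuasiMobiusWith η f) {x y : X} (hxy : x ≠ y) : 0 < dist (f x) (f y) :=
  _root_.dist_pos.2 (hf.1.ne hxy)

lemma eventually_dist_lt (hη : ControlFunction η) (hf : IsQuasiMobiusWith η f) {p q e : X}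
    (hpq : p ≠ q) (hpe : p ≠ e) (heq : e ≠ q) :
    ∀ᶠ x in 𝓝 e, dist (f x) (f e) < dist (f e) (f q) := by
  have hc : 0 < dist (f p) (f q) / (2 * dist (f p) (f e)) :=
    div_pos (hf.dist_pos hpq) (mul_pos two_pos (hf.dist_pos hpe))
  have hcr : Tendsto (fun x => crossRatio x p e q) (𝓝 e) (𝓝[≥] 0) := by
    have hcont : ContinuousAt (fun x => crossRatio x p e q) e :=
      ((continuous_id.dist continuous_const).mul continuous_const).continuousAt.div
        ((continuous_id.dist continuous_const).mul continuous_const).continuousAt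
        (mul_pos (_root_.dist_pos.2 heq) (_root_.dist_pos.2 hpe)).ne'
    refine tendsto_nhdsWithin_iff.2 ⟨?_, Eventually.of_forall fun x => crossRatio_nonneg x p e q⟩
    simpa [crossRatio] using hcont.tendsto
  filter_upwards [(hη.tendsto_nhdsWithin_Ici.comp hcr).eventually_lt_const hc,
    eventually_ne_nhds hpe.symm, eventually_ne_nhds heq] with x hx hxp hxq
  rcases eq_or_ne x e with rfl | hxe
  · simpa using hf.dist_pos heq
  by_contra! hle
  have hlow := div_two_mul_le_crossRatio (hf.dist_pos hxe) (hf.dist_pos hxq) (hf.dist_pos hpe) hle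
  have hqm := hf.2 x p e q hxp hxe hxq hpe hpq heq
  exact hx.not_ge (hlow.trans hqm)

/-- Needed because `diam` of an unbounded set is `0`. A quasi-Möbius map is locally bounded:
as `x → e` the cross ratio `[x,p,e,q]` tends to `0`, whereas `[f x,f p,f e,f q]` stays bounded
below once `f x` is far from `f e`. -/
lemma isBounded_image (hη : ControlFunction η) (hf : IsQuasiMobiusWith η f) {E : Set X}
    (hE : IsCompact E) {p q : X} (hpq : p ≠ q) (hp : p ∉ E) (hq : q ∉ E) :
    IsBounded (f '' E) := by
  refine hE.induction_on (p := fun s => IsBounded (f '' s)) (by simp)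
    (fun s t hst ht => ht.subset (image_mono hst))
    (fun s t hs ht => by simpa only [image_union] using hs.union ht) fun e he => ?_
  refine ⟨_, mem_nhdsWithin_of_mem_nhds
    (hf.eventually_dist_lt hη hpq (ne_of_mem_of_not_mem he hp).symm (ne_of_mem_of_not_mem he hq)),
    (isBounded_ball (x := f e) (r := dist (f e) (f q))).subset ?_⟩
  rintro _ ⟨x, hx, rfl⟩
  exact hx

lemma mul_diam_image_le (hη : ControlFunction η) (hf : IsQuasiMobiusWith η f) {E F : Set X}
    (hEF : Disjoint E F) (hbE : IsBounded (f '' E)) (hbF : IsBounded (f '' F))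
    (ha : 0 < diam (f '' E)) (hb : 0 < diam (f '' F)) {ψ : ℝ} (hψ : 0 < ψ)
    (hcr : ∀ z1 ∈ E, ∀ z3 ∈ E, ∀ z2 ∈ F, ∀ z4 ∈ F, crossRatio z1 z2 z3 z4 ≤ ψ)
    {p q : X} (hp : p ∈ E) (hq : q ∈ F) :
    diam (f '' E) * diam (f '' F) ≤
      9 * η ψ * dist (f p) (f q) * (diam (f '' E) + diam (f '' F) + dist (f p) (f q)) := by
  obtain ⟨_, ⟨x3, hx3, rfl⟩, h3⟩ := exists_mem_diam_le_three_mul_dist ha (f p)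
  obtain ⟨_, ⟨x2, hx2, rfl⟩, h2⟩ := exists_mem_diam_le_three_mul_dist hb (f q)
  have hpx3 : p ≠ x3 := by rintro rfl; linarith [dist_self (f p)]
  have hqx2 : q ≠ x2 := by rintro rfl; linarith [dist_self (f q)]
  have hqm := hf.2 p x2 x3 q (hEF.ne_of_mem hp hx2) hpx3 (hEF.ne_of_mem hp hq)
    (hEF.ne_of_mem hx3 hx2).symm hqx2.symm (hEF.ne_of_mem hx3 hq)
  have hk : η (crossRatio p x2 x3 q) ≤ η ψ :=
    hη.2.1.monotoneOn (crossRatio_nonneg p x2 x3 q) hψ.le (hcr p hp x3 hx3 x2 hx2 q hq)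
  exact mul_diam_le_of_crossRatio_le hbE hbF (mem_image_of_mem f hp) (mem_image_of_mem f hx3)
    (mem_image_of_mem f hx2) (mem_image_of_mem f hq) (hf.dist_pos (hEF.ne_of_mem hp hq))
    (hf.dist_pos (hEF.ne_of_mem hx3 hx2).symm) (hη.pos hψ).le h3 h2 (hqm.trans hk)

lemma relDeltaLowerBound_le (hη : ControlFunction η) (hf : IsQuasiMobiusWith η f) {E F : Set X}
    (hE : IsCompact E) (hF : IsCompact F) (hE' : E.Nontrivial) (hF' : F.Nontrivial)
    (hEF : Disjoint E F) : relDeltaLowerBound η (relDelta E F) ≤ relDelta (f '' E) (f '' F) := by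
  have hs : 0 < setDist E F := hE.setDist_pos hF hE'.nonempty hF'.nonempty hEF
  have ht : 0 < relDelta E F :=
    div_pos hs (lt_min (diam_pos hE' hE.isBounded) (diam_pos hF' hF.isBounded))
  set ψ := 2 * (relDelta E F)⁻¹ + (relDelta E F)⁻¹ ^ 2
  have hψ : 0 < ψ := by positivity
  obtain ⟨p, hp, p', hp', hpp'⟩ := hE'
  obtain ⟨q, hq, q', hq', hqq'⟩ := hF'
  have hbE : IsBounded (f '' E) :=
    hf.isBounded_image hη hE hqq' (hEF.notMem_of_mem_right hq) (hEF.notMem_of_mem_right hq')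
  have hbF : IsBounded (f '' F) :=
    hf.isBounded_image hη hF hpp' (hEF.notMem_of_mem_left hp) (hEF.notMem_of_mem_left hp')
  set a := diam (f '' E)
  set b := diam (f '' F)
  set D := setDist (f '' E) (f '' F)
  have ha : 0 < a :=
    diam_pos ⟨f p, mem_image_of_mem f hp, f p', mem_image_of_mem f hp', hf.1.ne hpp'⟩ hbE
  have hb : 0 < b :=
    diam_pos ⟨f q, mem_image_of_mem f hq, f q', mem_image_of_mem f hq', hf.1.ne hqq'⟩ hbF
  have hab : a * b ≤ 9 * η ψ * D * (a + b + D) :=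
    le_apply_setDist_of_forall_le (g := fun d => 9 * η ψ * d * (a + b + d)) (by fun_prop)
      ⟨f p, mem_image_of_mem f hp⟩ ⟨f q, mem_image_of_mem f hq⟩ <| by
        rintro _ ⟨x, hx, rfl⟩ _ ⟨y, hy, rfl⟩
        exact hf.mul_diam_image_le hη hEF hbE hbF ha hb hψ
          (fun _ h1 _ h3 _ h2 _ h4 => crossRatio_le_of_mem hE.isBounded hF.isBounded hs h1 h3 h2 h4)
          hx hy
  have hmin :=
    min_le_mul_of_mul_le ha hb (setDist_nonneg _ _) (mul_nonneg (by norm_num) (hη.pos hψ).le) hab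
  rw [show 3 * (9 * η ψ) = 27 * η ψ by ring] at hmin
  have hM : 0 < max (27 * η ψ) √(27 * η ψ) :=
    lt_max_of_lt_left (mul_pos (by norm_num) (hη.pos hψ))
  change (max (27 * η ψ) √(27 * η ψ))⁻¹ ≤ D / min a b
  rwa [le_div_iff₀ (lt_min ha hb), inv_mul_le_iff₀ hM]

end IsQuasiMobiusWith

/-- If `f` is `η`-quasi-Möbius then there is `Φ : ℝ⁺ → ℝ⁺` with `Φ(t) → ∞` as `t → ∞`,
depending only on `η`, such that `Δ(f(E), f(F)) ≥ Φ(Δ(E,F))` for all disjoint continua. -/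
theorem stmt_7 (η : ℝ → ℝ) (hη : ControlFunction η) :
    ∃ Φ : ℝ → ℝ, (∀ t > (0:ℝ), 0 < Φ t) ∧
      Filter.Tendsto Φ Filter.atTop Filter.atTop ∧
      ∀ (X Y : Type) [MetricSpace X] [MetricSpace Y] (f : X → Y),
        IsQuasiMobiusWith η f →
        ∀ E F : Set X, IsContinuum E → IsContinuum F → Disjoint E F →
          Φ (relDelta E F) ≤ relDelta (f '' E) (f '' F) := by
  refine ⟨relDeltaLowerBound η, fun t ht => hη.relDeltaLowerBound_pos ht,
    hη.tendsto_relDeltaLowerBound, ?_⟩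
  intro X Y _ _ f hf E F hE hF hEF
  exact hf.relDeltaLowerBound_le hη hE.1 hF.1 hE.2.2 hF.2.2 hEF
end

section
/- Let G = (V, ∼) be a graph with vertex valence bounded by d₀ ≥ 1. For every Q > 1 and s > 0 there exists C = C(d₀, s, Q) such that: if A, B, A', B' ⊂ V with A' contained in the s-neighborhood N_s(A) and B' ⊂ N_s(B) (with respect to the combinatorial metric), then mod_Q(A',B') ≤ C · mod_Q(A,B). -/
open scoped ENNReal

/-!
If `w` is admissible for `(A, B)`, then `v ↦ ∑_{u ∈ B(v, ⌈s⌉)} w u` is admissible for `(A', B')`: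
a chain from `A'` to `B'` extends by geodesics, lying in the balls around its two endpoints, to a
walk from `A` to `B`, and every vertex of that walk lies in the ball around some vertex of the
chain. A ball has at most `N = (d₀ + 1)^⌈s⌉` vertices, so Hölder's inequality on each ball and
double counting bound the `Q`-energy of the new weight by `N^Q` times that of `w`.
-/

/-- A weight `w` is admissible for the pair `(A,B)` in the graph `G` if it sums to at least
`1` along every chain connecting `A` to `B` (consecutive vertices adjacent or equal). -/
def GraphAdmissible {V : Type*} (G : SimpleGraph V) (A B : Set V) (w : V → ℝ≥0∞) : Prop :=
  ∀ (n : ℕ) (x : Fin (n + 1) → V),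
    (∀ i : Fin n, G.Adj (x i.castSucc) (x i.succ) ∨ x i.castSucc = x i.succ) →
    x 0 ∈ A → x (Fin.last n) ∈ B → 1 ≤ ∑ i, w (x i)

/-- The combinatorial `Q`-modulus `mod_Q(A,B)` of a pair of vertex sets in a graph. -/
noncomputable def gmodQ {V : Type*} (G : SimpleGraph V) (Q : ℝ) (A B : Set V) : ℝ≥0∞ :=
  ⨅ (w : V → ℝ≥0∞) (_ : GraphAdmissible G A B w), ∑' v, w v ^ Q

/-- The `s`-neighborhood of a vertex set `A` in the combinatorial metric of `G`. -/
def graphNbhd {V : Type*} (G : SimpleGraph V) (s : ℝ) (A : Set V) : Set V :=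
  {u | ∃ a ∈ A, G.Reachable u a ∧ ((G.dist u a : ℝ) < s)}

open SimpleGraph Finset

variable {V : Type*} {G : SimpleGraph V}

namespace SimpleGraph

lemma ball_succ_succ_subset (c : V) (k : ℕ) :
    G.ball c (k + 2) ⊆ ⋃ x ∈ G.ball c (k + 1), insert x (G.neighborSet x) := by
  intro v hv
  obtain ⟨p, hp⟩ := (reachable_of_edist_ne_top (ne_top_of_lt hv)).exists_walk_length_eq_edist
  simp only [Set.mem_iUnion, Set.mem_insert_iff, mem_neighborSet, exists_prop]
  cases p with
  | nil => exact ⟨_, mem_ball_self (by positivity), Or.inl rfl⟩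
  | @cons _ x _ h q =>
    refine ⟨x, ?_, Or.inr h.symm⟩
    have hlen : q.length + 1 < k + 2 := by
      rw [← Walk.length_cons h q]; exact_mod_cast hp.trans_lt hv
    exact (edist_le q).trans_lt (by exact_mod_cast (by omega : q.length < k + 1))

lemma encard_ball_le {d : ℕ} (hd : ∀ v, (G.neighborSet v).encard ≤ d) (c : V) (k : ℕ) :
    (G.ball c (k + 1)).encard ≤ (d + 1) ^ k := by
  induction k with
  | zero => simp
  | succ k ih =>
    have hfin := Set.finite_of_encard_le_coe (ih.trans_eq (by norm_cast))
    calc (G.ball c (k + 1 + 1)).encard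
        ≤ (⋃ x ∈ hfin.toFinset, insert x (G.neighborSet x)).encard := by
          refine Set.encard_le_encard ?_
          simpa [add_assoc, one_add_one_eq_two] using ball_succ_succ_subset (G := G) c k
      _ ≤ ∑ x ∈ hfin.toFinset, (insert x (G.neighborSet x)).encard :=
          set_encard_biUnion_le _ _
      _ ≤ ∑ x ∈ hfin.toFinset, ((d : ℕ∞) + 1) :=
          sum_le_sum fun x _ => (Set.encard_insert_le _ _).trans (by gcongr; exact hd x)
      _ = (G.ball c (k + 1)).encard * (d + 1) := by
          rw [sum_const, nsmul_eq_mul, hfin.encard_eq_coe_toFinset_card]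
      _ ≤ (d + 1) ^ (k + 1) := by rw [pow_succ]; gcongr

lemma exists_finset_eq_ball {d : ℕ} (hd : ∀ v, (G.neighborSet v).encard ≤ d) (k : ℕ) :
    ∃ S : V → Finset V, (∀ v, (S v : Set V) = G.ball v k) ∧ ∀ v, #(S v) ≤ (d + 1) ^ k := by
  have hcard (v : V) : (G.ball v k).encard ≤ ((d + 1) ^ k : ℕ) := by
    push_cast
    exact (Set.encard_le_encard (ball_mono (by simp))).trans (encard_ball_le hd v k)
  refine ⟨fun v => (Set.finite_of_encard_le_coe (hcard v)).toFinset, fun v => by simp,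
    fun v => ?_⟩
  rw [← ENat.natCast_le_natCast, ← Set.encard_coe_eq_coe_finsetCard, Set.Finite.coe_toFinset]
  exact hcard v

lemma exists_walk_support_subset_ball {u v : V} {r : ℕ∞} (h : G.edist u v < r) :
    ∃ p : G.Walk u v, ∀ y ∈ p.support, y ∈ G.ball u r := by
  classical
  obtain ⟨p, hp⟩ := (reachable_of_edist_ne_top (ne_top_of_lt h)).exists_walk_length_eq_edist
  refine ⟨p, fun y hy => ?_⟩
  rw [mem_ball, edist_comm]
  calc G.edist u y ≤ (p.takeUntil y hy).length := edist_le _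
    _ ≤ p.length := by exact_mod_cast p.length_takeUntil_le_length hy
    _ < r := hp ▸ h

lemma exists_walk_of_chain {n : ℕ} (x : Fin (n + 1) → V)
    (hx : ∀ i : Fin n, G.Adj (x i.castSucc) (x i.succ) ∨ x i.castSucc = x i.succ)
    (i : Fin (n + 1)) : ∃ p : G.Walk (x 0) (x i), ∀ y ∈ p.support, y ∈ Set.range x := by
  induction i using Fin.induction with
  | zero => exact ⟨Walk.nil, by simp⟩
  | succ i ih =>
    obtain ⟨p, hp⟩ := ih
    rcases hx i with h | h
    · refine ⟨p.concat h, fun y hy => ?_⟩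
      rw [Walk.support_concat, List.mem_append, List.mem_singleton] at hy
      rcases hy with hy | rfl
      exacts [hp y hy, ⟨_, rfl⟩]
    · exact ⟨p.copy rfl h, by simpa using hp⟩

end SimpleGraph

lemma exists_edist_lt_of_mem_graphNbhd {s : ℝ} {A : Set V} {u : V} (hu : u ∈ graphNbhd G s A) :
    ∃ a ∈ A, G.edist u a < ⌈s⌉₊ := by
  obtain ⟨a, ha, hr, hd⟩ := hu
  refine ⟨a, ha, ?_⟩
  rw [← hr.coe_dist_eq_edist]
  exact_mod_cast (hd.trans_le (Nat.le_ceil s) : (G.dist u a : ℝ) < ⌈s⌉₊)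

namespace GraphAdmissible

variable {A B : Set V} {w : V → ℝ≥0∞}

lemma one_le_sum_support [DecidableEq V] (hw : GraphAdmissible G A B w) {a b : V} (ha : a ∈ A)
    (hb : b ∈ B) (p : G.Walk a b) : 1 ≤ ∑ u ∈ p.support.toFinset, w u := by
  -- the vertices of a path are enumerated without repetition
  set P := p.bypass
  have hinj : Function.Injective fun i : Fin (P.length + 1) => P.getVert i := fun i j hij =>
    Fin.ext (p.bypass_isPath.getVert_injOn (Nat.lt_succ_iff.mp i.2) (Nat.lt_succ_iff.mp j.2) hij)
  calc 1 ≤ ∑ i : Fin (P.length + 1), w (P.getVert i) :=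
        hw _ _ (fun i => Or.inl (P.adj_getVert_succ i.2)) (by simpa using ha) (by simpa using hb)
    _ = ∑ u ∈ univ.image (fun i : Fin (P.length + 1) => P.getVert i), w u :=
        (sum_image fun i _ j _ h => hinj h).symm
    _ ≤ ∑ u ∈ p.support.toFinset, w u := sum_le_sum_of_subset fun u hu => by
        obtain ⟨i, -, rfl⟩ := mem_image.mp hu
        exact List.mem_toFinset.mpr (p.support_bypass_subset_support (P.getVert_mem_support i))

lemma sum_ball (hw : GraphAdmissible G A B w) {A' B' : Set V} {r : ℕ∞}
    (hA : ∀ u ∈ A', ∃ a ∈ A, G.edist u a < r) (hB : ∀ u ∈ B', ∃ b ∈ B, G.edist u b < r)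
    (S : V → Finset V) (hS : ∀ v, G.ball v r ⊆ S v) :
    GraphAdmissible G A' B' (fun v => ∑ u ∈ S v, w u) := by
  classical
  intro n x hx hx0 hxn
  obtain ⟨a, ha, hra⟩ := hA _ hx0
  obtain ⟨b, hb, hrb⟩ := hB _ hxn
  obtain ⟨p, hp⟩ := exists_walk_support_subset_ball hra
  obtain ⟨q, hq⟩ := exists_walk_support_subset_ball hrb
  obtain ⟨m, hm⟩ := exists_walk_of_chain x hx (Fin.last n)
  set W := p.reverse.append (m.append q)
  have hcover : W.support.toFinset ⊆ univ.sup fun i => S (x i) := by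
    intro y hy
    simp only [W, List.mem_toFinset, Walk.mem_support_append_iff, Walk.support_reverse,
      List.mem_reverse] at hy
    rw [mem_sup]
    rcases hy with hy | hy | hy
    · exact ⟨0, mem_univ _, hS _ (hp y hy)⟩
    · obtain ⟨i, rfl⟩ := hm y hy
      exact ⟨i, mem_univ _, hS _ (mem_ball_self (pos_of_gt hra))⟩
    · exact ⟨Fin.last n, mem_univ _, hS _ (hq y hy)⟩
  calc 1 ≤ ∑ u ∈ W.support.toFinset, w u := hw.one_le_sum_support ha hb W
    _ ≤ ∑ u ∈ univ.sup fun i => S (x i), w u := sum_le_sum_of_subset hcover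
    _ ≤ ∑ i, ∑ u ∈ S (x i), w u :=
        univ.apply_sup_le_sum (f := fun T => ∑ u ∈ T, w u) sum_empty
          (le_self_add.trans_eq sum_union_inter)

end GraphAdmissible

lemma tsum_sum_le_mul_tsum {S : V → Finset V} (hS : ∀ u v, u ∈ S v → v ∈ S u) {N : ℕ}
    (hSN : ∀ v, #(S v) ≤ N) (g : V → ℝ≥0∞) : ∑' v, ∑ u ∈ S v, g u ≤ N * ∑' u, g u := by
  classical
  have hsum (s : Finset V) (f : V → ℝ≥0∞) : ∑ u ∈ s, f u = ∑' u, if u ∈ s then f u else 0 := by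
    rw [sum_eq_tsum_indicator]; simp only [Set.indicator_apply, mem_coe]
  calc ∑' v, ∑ u ∈ S v, g u = ∑' u, ∑' v, if u ∈ S v then g u else 0 := by
        simp only [hsum]; exact ENNReal.tsum_comm
    _ ≤ ∑' u, ∑' v, if v ∈ S u then g u else 0 :=
        ENNReal.tsum_le_tsum fun u => ENNReal.tsum_le_tsum fun v => by
          by_cases h : u ∈ S v <;> simp [h, hS u v]
    _ = ∑' u, #(S u) * g u := by simp only [← hsum, sum_const, nsmul_eq_mul]
    _ ≤ ∑' u, N * g u := ENNReal.tsum_le_tsum fun u => by gcongr; exact hSN u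
    _ = N * ∑' u, g u := ENNReal.tsum_mul_left

lemma tsum_rpow_sum_le {Q : ℝ} (hQ : 1 ≤ Q) {S : V → Finset V} (hS : ∀ u v, u ∈ S v → v ∈ S u)
    {N : ℕ} (hSN : ∀ v, #(S v) ≤ N) (w : V → ℝ≥0∞) :
    ∑' v, (∑ u ∈ S v, w u) ^ Q ≤ (N : ℝ≥0∞) ^ Q * ∑' v, w v ^ Q := by
  calc ∑' v, (∑ u ∈ S v, w u) ^ Q ≤ ∑' v, (N : ℝ≥0∞) ^ (Q - 1) * ∑ u ∈ S v, w u ^ Q :=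
        ENNReal.tsum_le_tsum fun v =>
          (ENNReal.rpow_sum_le_const_mul_sum_rpow (S v) w hQ).trans (by gcongr; exact hSN v)
    _ ≤ (N : ℝ≥0∞) ^ (Q - 1) * (N * ∑' v, w v ^ Q) := by
        rw [ENNReal.tsum_mul_left]; gcongr; exact tsum_sum_le_mul_tsum hS hSN _
    _ = (N : ℝ≥0∞) ^ Q * ∑' v, w v ^ Q := by
        rw [← mul_assoc]
        congr 1
        simpa using (ENNReal.rpow_add_of_add_pos (ENNReal.natCast_ne_top N) (Q - 1) 1
          (by linarith)).symm

lemma gmodQ_le_mul_of_forall_admissible {Q : ℝ} {A B A' B' : Set V} {C : ℝ≥0∞} (hC₀ : C ≠ 0)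
    (hC : C ≠ ⊤) (h : ∀ w, GraphAdmissible G A B w →
      ∃ w', GraphAdmissible G A' B' w' ∧ ∑' v, w' v ^ Q ≤ C * ∑' v, w v ^ Q) :
    gmodQ G Q A' B' ≤ C * gmodQ G Q A B := by
  simp only [gmodQ, ENNReal.mul_iInf_of_ne hC₀ hC]
  refine le_iInf₂ fun w hw => ?_
  obtain ⟨w', hw', hle⟩ := h w hw
  exact (iInf₂_le w' hw').trans hle

theorem stmt_9_general (d0 : ℕ) (Q : ℝ) (hQ : 1 < Q) (s : ℝ) :
    ∃ C : ℝ, 0 < C ∧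
      ∀ (V : Type) (G : SimpleGraph V),
        (∀ v : V, (G.neighborSet v).Finite) →
        (∀ v : V, (G.neighborSet v).ncard ≤ d0) →
        ∀ A B A' B' : Set V, A' ⊆ graphNbhd G s A → B' ⊆ graphNbhd G s B →
          gmodQ G Q A' B' ≤ ENNReal.ofReal C * gmodQ G Q A B := by
  set N := (d0 + 1) ^ ⌈s⌉₊
  refine ⟨(N : ℝ) ^ Q, by positivity, fun V G hfin hd A B A' B' hA' hB' => ?_⟩
  have hdeg (v : V) : (G.neighborSet v).encard ≤ d0 := by
    rw [← (hfin v).cast_ncard_eq]; exact_mod_cast hd v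
  obtain ⟨S, hS, hSN⟩ := exists_finset_eq_ball hdeg ⌈s⌉₊
  have hS_symm (u v : V) (h : u ∈ S v) : v ∈ S u := by
    rw [← mem_coe, hS] at h ⊢; exact mem_ball_comm.mp h
  rw [← ENNReal.ofReal_rpow_of_nonneg (by positivity) (by positivity), ENNReal.ofReal_natCast]
  refine gmodQ_le_mul_of_forall_admissible (by positivity)
    (ENNReal.rpow_ne_top_of_nonneg (by linarith) (ENNReal.natCast_ne_top N)) fun w hw =>
    ⟨_, hw.sum_ball (fun u hu => exists_edist_lt_of_mem_graphNbhd (hA' hu))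
      (fun u hu => exists_edist_lt_of_mem_graphNbhd (hB' hu)) S (fun v => (hS v).ge),
      tsum_rpow_sum_le hQ.le hS_symm hSN w⟩

/-- If the valence of `G` is at most `d₀`, then for `Q > 1` and `s > 0` there is
`C = C(d₀,s,Q)` with `mod_Q(A',B') ≤ C·mod_Q(A,B)` whenever `A' ⊆ N_s(A)`, `B' ⊆ N_s(B)`. -/
theorem stmt_9 (d0 : ℕ) (hd0 : 1 ≤ d0) (Q : ℝ) (hQ : 1 < Q) (s : ℝ) (hs : 0 < s) :
    ∃ C : ℝ, 0 < C ∧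
      ∀ (V : Type) (G : SimpleGraph V),
        (∀ v : V, (G.neighborSet v).Finite) →
        (∀ v : V, (G.neighborSet v).ncard ≤ d0) →
        ∀ A B A' B' : Set V, A' ⊆ graphNbhd G s A → B' ⊆ graphNbhd G s B →
          gmodQ G Q A' B' ≤ ENNReal.ofReal C * gmodQ G Q A B :=
  stmt_9_general d0 Q hQ s
end
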